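/- arXiv:2301.08295 — 4 statements merged into one kernel-verified Lean document; each statement's English description precedes it below -/
import Mathlib

section
/- Let n be a positive integer, K and N positive integers with K < N ≤ 2^n, and let q* be the largest q in [0, n] such that the sum over r from 0 to q-1 of binomial(n, r) is at most N - K. Then the (N-K+1)-th smallest value of the multiset {2^{w(i)} : 0 ≤ i ≤ 2^n - 1}, where w(i) is the Hamming weight of i, is at least 2^{q*}. -/
/-!
Among the `2 ^ n` values `2 ^ w(i)`, those below `2 ^ qs` come from the `i` of Hamming weight
below `qs`, and sending `i` to its set of one-bits shows that there are at most
`∑ r < qs, C(n, r) ≤ N - K` of them. So fewer than `N - K + 1` entries of the sorted list lie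
below `2 ^ qs`, and its entry at index `N - K` is at least `2 ^ qs`.
-/

open Finset

theorem Nat.sum_digits_two_eq_length_bitIndices (n : ℕ) :
    (Nat.digits 2 n).sum = n.bitIndices.length := by
  induction n using Nat.binaryRec with
  | zero => simp
  | bit b n ih =>
    cases b
    · rcases n.eq_zero_or_pos with rfl | hn
      · simp
      · rw [Nat.bit_false, Nat.digits_def' one_lt_two (by omega : 0 < 2 * n)]
        simpa
    · rw [Nat.bit_true, Nat.digits_add_two_add_one, show (2 * n + 1) / 2 = n by omega]
      simp only [List.sum_cons, ih, Nat.bitIndices_two_mul_add_one, List.length_cons,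
        List.length_map]
      omega

theorem List.le_getElem_of_countP_lt_le {α : Type*} [LinearOrder α] {l : List α}
    (hl : l.Pairwise (· ≤ ·)) {k : ℕ} (hk : k < l.length) {b : α}
    (hcount : l.countP (· < b) ≤ k) : b ≤ l[k] := by
  by_contra! hlt
  have hprefix : ∀ x ∈ l.take (k + 1), x < b := by
    intro x hx
    obtain ⟨j, hj, rfl⟩ := List.mem_take_iff_getElem.mp hx
    refine lt_of_le_of_lt ?_ hlt
    exact hl.rel_get_of_le (a := ⟨j, by omega⟩) (b := ⟨k, hk⟩) (Fin.mk_le_mk.mpr (by omega))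
  have := (l.take_sublist (k + 1)).countP_le (p := (· < b))
  rw [List.countP_eq_length.mpr (by simpa using hprefix), List.length_take] at this
  omega

theorem Multiset.le_getD_sort_of_card_filter_lt_le {α : Type*} [LinearOrder α] {s : Multiset α}
    {k : ℕ} (hk : k < card s) {b : α} (d : α) (hcount : card (s.filter (· < b)) ≤ k) :
    b ≤ (s.sort (· ≤ ·)).getD k d := by
  have hk' : k < (s.sort (· ≤ ·)).length := by simpa using hk
  rw [List.getD_eq_getElem _ _ hk']
  refine List.le_getElem_of_countP_lt_le (s.pairwise_sort _) hk' ?_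
  rwa [← Multiset.coe_countP, Multiset.sort_eq, Multiset.countP_eq_card_filter]

theorem Nat.card_filter_sum_digits_two_lt_le (n q : ℕ) :
    #{i ∈ range (2 ^ n) | (Nat.digits 2 i).sum < q} ≤ ∑ r ∈ range q, n.choose r := by
  calc #{i ∈ range (2 ^ n) | (Nat.digits 2 i).sum < q}
      ≤ #((range q).biUnion fun r ↦ powersetCard r (range n)) := by
        refine card_le_card_of_injOn equivBitIndices (fun i hi ↦ ?_)
          (equivBitIndices.injective.injOn)
        simp only [coe_filter, mem_range, Set.mem_ofPred_eq] at hi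
        simp only [coe_biUnion, coe_range, Set.mem_Iio, mem_coe, mem_powersetCard, Set.mem_iUnion]
        refine ⟨_, ?_, ?_, rfl⟩
        · rw [equivBitIndices_apply, List.toFinset_card_of_nodup Nat.bitIndices_nodup,
            ← Nat.sum_digits_two_eq_length_bitIndices]
          exact hi.2
        · intro j hj
          simp only [equivBitIndices_apply, List.mem_toFinset] at hj
          exact mem_range.mpr ((Nat.pow_lt_pow_iff_right one_lt_two).mp
            ((Nat.two_pow_le_of_mem_bitIndices hj).trans_lt hi.1))
    _ ≤ ∑ r ∈ range q, #(powersetCard r (range n)) := card_biUnion_le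
    _ = ∑ r ∈ range q, n.choose r := by simp

theorem kth_smallest_leafset_lower_bound_general (n N K qs : ℕ)
    (hK : 0 < K) (hN : N ≤ 2 ^ n)
    (hsum : ∑ r ∈ Finset.range qs, n.choose r ≤ N - K) :
    2 ^ qs ≤
      (Multiset.sort
        ((Multiset.range (2 ^ n)).map (fun i => 2 ^ ((Nat.digits 2 i).sum))) (· ≤ ·)).getD (N - K) 0 := by
  have hindex : N - K < Multiset.card ((Multiset.range (2 ^ n)).map
      (fun i => 2 ^ ((Nat.digits 2 i).sum))) := by
    simp only [Multiset.card_map, Multiset.card_range]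
    have := Nat.one_le_two_pow (n := n)
    omega
  refine Multiset.le_getD_sort_of_card_filter_lt_le hindex 0 (le_trans ?_ hsum)
  rw [Multiset.filter_map, Multiset.card_map]
  simp only [Function.comp_def, Nat.pow_lt_pow_iff_right one_lt_two]
  exact Nat.card_filter_sum_digits_two_lt_le n qs

/-- Let `n` be a positive integer, `K, N` positive integers with `K < N ≤ 2^n`, and let
`qs` be the largest `q ∈ [0, n]` such that `∑_{r=0}^{q-1} C(n, r) ≤ N - K`.  Then the
`(N-K+1)`-th smallest value of the multiset `{2^{w(i)} : 0 ≤ i ≤ 2^n - 1}` (where `w(i)`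
is the Hamming weight of `i`, taken here as the sum of the binary digits of `i`)
is at least `2^qs`.  The `(N-K+1)`-th smallest value is the entry at 0-based index
`N-K` of the sorted list of the multiset. -/
theorem kth_smallest_leafset_lower_bound (n N K qs : ℕ)
    (hn : 0 < n) (hK : 0 < K) (hKN : K < N) (hN : N ≤ 2 ^ n)
    (hqs : qs ≤ n)
    (hsum : ∑ r ∈ Finset.range qs, n.choose r ≤ N - K)
    (hmax : ∀ q, q ≤ n → (∑ r ∈ Finset.range q, n.choose r ≤ N - K) → q ≤ qs) :
    2 ^ qs ≤
      (Multiset.sort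
        ((Multiset.range (2 ^ n)).map (fun i => 2 ^ ((Nat.digits 2 i).sum))) (· ≤ ·)).getD (N - K) 0 :=
  kth_smallest_leafset_lower_bound_general n N K qs hK hN hsum
end

section
/- Let positive integers N_l, N_j, μ_min, α_min,j satisfy 1 ≤ α_min,j ≤ N_j, N_j ≤ N_l, and μ_min = floor((α_min,j - 1)/N_j · N_l) + 1. If a set S of base-layer symbols has |S| ≥ N_l - μ_min + 1, then ceil((N_l - μ_min + 1)/N_l · N_j) ≥ N_j - α_min,j + 1. -/
/-- Arithmetic core of Lemma 1 (dispersal correctness propagating between CMT layers).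
Let positive integers `N_l, N_j, μ, α` satisfy `1 ≤ α ≤ N_j`, `N_j ≤ N_l`, and
`μ = ⌊((α - 1)/N_j)·N_l⌋ + 1`.  If a set `S` of base-layer symbols has
`|S| ≥ N_l - μ + 1`, then `⌈((N_l - μ + 1)/N_l)·N_j⌉ ≥ N_j - α + 1`. -/
theorem dispersal_layer_propagation (Nl Nj μ α : ℕ) (S : Finset ℕ)
    (hNl : 0 < Nl) (hNj : 0 < Nj) (hα1 : 1 ≤ α) (hα2 : α ≤ Nj) (hjl : Nj ≤ Nl)
    (hμ : (μ : ℤ) = ⌊(((α : ℝ) - 1) / (Nj : ℝ)) * (Nl : ℝ)⌋ + 1)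
    (hS : (Nl : ℤ) - μ + 1 ≤ S.card) :
    (Nj : ℤ) - α + 1 ≤ ⌈(((Nl : ℝ) - μ + 1) / (Nl : ℝ)) * (Nj : ℝ)⌉ := by
  have hNl' : (0:ℝ) < Nl := by exact_mod_cast hNl
  have hNj' : (0:ℝ) < Nj := by exact_mod_cast hNj
  set x : ℝ := ((α : ℝ) - 1) / (Nj : ℝ) * (Nl : ℝ) with hx
  have hfloor : (μ : ℝ) - 1 ≤ x := by
    have h1 : ((⌊x⌋ : ℤ) : ℝ) ≤ x := Int.floor_le x
    have h2 : (μ : ℝ) = ((⌊x⌋ : ℤ) : ℝ) + 1 := by exact_mod_cast hμ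
    linarith
  have h2 : ((μ:ℝ) - 1) * Nj ≤ ((α:ℝ) - 1) * Nl := by
    have := mul_le_mul_of_nonneg_right hfloor hNj'.le
    rw [hx, div_mul_eq_mul_div, div_mul_eq_mul_div, mul_comm] at this
    rw [mul_div_assoc, div_self hNj'.ne', mul_one] at this
    linarith
  have key : ((Nj:ℝ) - α) < ((Nl:ℝ) - μ + 1) / Nl * Nj := by
    rw [div_mul_eq_mul_div, lt_div_iff₀ hNl']
    nlinarith
  have hlt : ((Nj:ℤ) - α) < ⌈(((Nl : ℝ) - μ + 1) / (Nl : ℝ)) * (Nj : ℝ)⌉ := by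
    apply Int.lt_ceil.mpr
    push_cast
    exact key
  omega
end

section
/- In the polar code factor graph G_N (N = 2^n), every stopping set ψ that contains a variable node in the rightmost column at a row index i in [N - δ + 1, N] must also contain, for each column m from n+1 down to 1, at least one variable node in a row with index in [N - δ + 1, N]; consequently, if all left-column variable nodes in rows [N - δ + 1, N] are frozen (excluded from stopping sets in Ψ^A), then no stopping set in Ψ^A contains any rightmost-column variable node in rows [N - δ + 1, N]. -/
/-- Adjacency in the polar factor graph `G_N`, `N = 2^n`, with `n+1` columns of
variable nodes (VNs) and `n` columns of check nodes (CNs), all indexed 0-based.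
The CN at column `m`, row `i` connects horizontally to the VNs at columns `m` and
`m+1` in row `i`; in addition, if `i` lies in the upper half of its butterfly block
(of half-width `h = 2^(n-1-m)`), a slanted edge connects it to the degree-3 VN at
column `m+1` in the strictly larger row `i + h`. -/
def polarAdj (n : ℕ) (c : Fin n × Fin (2 ^ n)) (v : Fin (n + 1) × Fin (2 ^ n)) : Prop :=
  (v.1.val = c.1.val ∧ v.2 = c.2) ∨
  (v.1.val = c.1.val + 1 ∧ v.2 = c.2) ∨
  (v.1.val = c.1.val + 1 ∧ c.2.val % (2 * 2 ^ (n - 1 - c.1.val)) < 2 ^ (n - 1 - c.1.val) ∧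
    v.2.val = c.2.val + 2 ^ (n - 1 - c.1.val))

/-- A stopping set: a set of variable nodes such that every check node adjacent to a
node of the set has at least two neighbors in the set. -/
def IsStoppingSet (n : ℕ) (ψ : Set (Fin (n + 1) × Fin (2 ^ n))) : Prop :=
  ∀ c v, v ∈ ψ → polarAdj n c v → ∃ w ∈ ψ, w ≠ v ∧ polarAdj n c w

lemma polar_step (n : ℕ) (ψ : Set (Fin (n + 1) × Fin (2 ^ n))) (hψ : IsStoppingSet n ψ)
    (δ m : ℕ) (hm : m < n) :
    ∀ k (i : Fin (2 ^ n)), 2 ^ n - i.val ≤ k → 2 ^ n - δ ≤ i.val →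
      ((⟨m + 1, by omega⟩ : Fin (n + 1)), i) ∈ ψ →
      ∃ i' : Fin (2 ^ n), 2 ^ n - δ ≤ i'.val ∧ ((⟨m, by omega⟩ : Fin (n + 1)), i') ∈ ψ := by
  intro k
  induction k with
  | zero =>
    intro i hk
    have := i.isLt
    omega
  | succ k ih =>
    intro i hk hi hmem
    obtain ⟨w, hw, hne, hadj⟩ := hψ (⟨m, hm⟩, i) _ hmem (Or.inr (Or.inl ⟨rfl, rfl⟩))
    rcases hadj with ⟨h1, h2⟩ | ⟨h1, h2⟩ | ⟨h1, _, h3⟩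
    · have hwv : w = ((⟨m, by omega⟩ : Fin (n + 1)), i) := Prod.ext (Fin.ext h1) h2
      exact ⟨i, hi, hwv ▸ hw⟩
    · exact absurd (Prod.ext (Fin.ext h1) h2) hne
    · have hpos : 1 ≤ 2 ^ (n - 1 - m) := Nat.one_le_two_pow
      have hlt := w.2.isLt
      have hmem' : w = ((⟨m + 1, by omega⟩ : Fin (n + 1)), w.2) := Prod.ext (Fin.ext h1) rfl
      exact ih w.2 (by simp at h3; omega) (by simp at h3; omega) (hmem' ▸ hw)

/-- In the polar factor graph `G_N` (`N = 2^n`): every stopping set `ψ` containing a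
rightmost-column variable node at a row index in the bottom `δ` rows (1-based rows
`[N - δ + 1, N]`, i.e. 0-based rows `≥ N - δ`) contains, in every column, at least one
variable node with row index in the bottom `δ` rows; consequently, if all left-column
variable nodes in the bottom `δ` rows are excluded from stopping sets (frozen), then no
such stopping set contains any rightmost-column variable node in the bottom `δ` rows. -/
theorem frozen_bottom_rows (n δ : ℕ) (ψ : Set (Fin (n + 1) × Fin (2 ^ n)))
    (hψ : IsStoppingSet n ψ) :
    (∀ i : Fin (2 ^ n), 2 ^ n - δ ≤ i.val → (Fin.last n, i) ∈ ψ →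
      ∀ m : Fin (n + 1), ∃ i' : Fin (2 ^ n), 2 ^ n - δ ≤ i'.val ∧ (m, i') ∈ ψ) ∧
    ((∀ i : Fin (2 ^ n), 2 ^ n - δ ≤ i.val → ((0 : Fin (n + 1)), i) ∉ ψ) →
      ∀ i : Fin (2 ^ n), 2 ^ n - δ ≤ i.val → (Fin.last n, i) ∉ ψ) := by
  have key : ∀ d (m : Fin (n + 1)), m.val + d = n →
      ∀ i : Fin (2 ^ n), 2 ^ n - δ ≤ i.val → (Fin.last n, i) ∈ ψ →
      ∃ i' : Fin (2 ^ n), 2 ^ n - δ ≤ i'.val ∧ (m, i') ∈ ψ := by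
    intro d
    induction d with
    | zero =>
      intro m hmn i hi hmem
      have : m = Fin.last n := Fin.ext (by simp [Fin.last]; omega)
      exact ⟨i, hi, this ▸ hmem⟩
    | succ d ih =>
      intro m hmn i hi hmem
      obtain ⟨i', hi', hm'⟩ := ih ⟨m.val + 1, by omega⟩ (by simp only [Fin.val_mk]; omega) i hi hmem
      have := polar_step n ψ hψ δ m.val (by omega) (2 ^ n) i' (by omega) hi' hm'
      obtain ⟨i'', hi'', h⟩ := this
      have hm : (⟨m.val, by omega⟩ : Fin (n + 1)) = m := Fin.ext rfl
      exact ⟨i'', hi'', hm ▸ h⟩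
  constructor
  · intro i hi hmem m
    exact key (n - m.val) m (by omega) i hi hmem
  · intro hfr i hi hmem
    obtain ⟨i', hi', h⟩ := key n 0 (by simp) i hi hmem
    exact hfr i' hi' h
end

section
/- In the polar factor graph G_N with N = 2^n and frozen/information index partition F ∪ A = [N], if the frozen set F contains the leftmost-column indices and A the rightmost-column indices, then the peeling encoder always succeeds: starting from known values at leftmost-column VNs indexed by F (set to zero) and rightmost-column VNs indexed by A (the data), the peeling process determines all variable nodes. Equivalently, no stopping set avoids both the leftmost-column frozen VNs and the rightmost-column information VNs. -/
lemma auxLt (a h M : ℕ) (hd : 2 * h ∣ M) (ha : a < M) (hm : a % (2 * h) < h) :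
    a + h < M := by
  obtain ⟨k, hk⟩ := hd
  have hh : 0 < h := by
    rcases Nat.eq_zero_or_pos h with h0 | h0
    · exfalso; subst h0; simp at hm
    · exact h0
  have h2 : 0 < 2 * h := by omega
  have hqr := Nat.div_add_mod a (2 * h)
  have hq : a / (2 * h) < k := by
    rw [Nat.div_lt_iff_lt_mul h2]
    calc a < M := ha
    _ = k * (2 * h) := by rw [hk]; ring
  nlinarith [hqr, hm, hq]

/-- Embedding of the half-graph VNs into the big graph with row offset `o`. -/
def embedV (n o : ℕ) (ho2 : o ≤ 2 ^ n) (p : Fin (n + 1) × Fin (2 ^ n)) :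
    Fin (n + 2) × Fin (2 ^ (n + 1)) :=
  (⟨p.1.val + 1, by have := p.1.isLt; omega⟩,
   ⟨p.2.val + o, by have := p.2.isLt; omega⟩)

lemma half_stopping (n : ℕ) (ψ : Set (Fin (n + 2) × Fin (2 ^ (n + 1))))
    (hψ : IsStoppingSet (n + 1) ψ) (o : ℕ) (ho2 : o ≤ 2 ^ n)
    (hod : ∀ k, k ≤ n → 2 ^ k ∣ o) :
    IsStoppingSet n (embedV n o ho2 ⁻¹' ψ) := by
  intro c' v' hv' hadj'
  obtain ⟨⟨cm, icm⟩, ⟨ci, ici⟩⟩ := c'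
  have h2h : 2 * 2 ^ (n - 1 - cm) = 2 ^ (n - cm) := by
    have he : n - cm = (n - 1 - cm) + 1 := by omega
    rw [he, pow_succ]; ring
  have hexp : n + 1 - 1 - (cm + 1) = n - 1 - cm := by omega
  have hdo : 2 * 2 ^ (n - 1 - cm) ∣ o := by rw [h2h]; exact hod (n - cm) (by omega)
  have hdvN : 2 * 2 ^ (n - 1 - cm) ∣ 2 ^ n := by rw [h2h]; exact pow_dvd_pow 2 (by omega)
  have hmod : ∀ a : ℕ, (a + o) % (2 * 2 ^ (n - 1 - cm)) = a % (2 * 2 ^ (n - 1 - cm)) := by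
    intro a
    obtain ⟨t, ht⟩ := hdo
    rw [ht, Nat.add_mul_mod_self_left]
  set c : Fin (n + 1) × Fin (2 ^ (n + 1)) :=
    (⟨cm + 1, by omega⟩, ⟨ci + o, by omega⟩) with hcdef
  have hadjBig : polarAdj (n + 1) c (embedV n o ho2 v') := by
    rcases hadj' with ⟨h1, h2⟩ | ⟨h1, h2⟩ | ⟨h1, h2, h3⟩
    · refine Or.inl ⟨?_, ?_⟩
      · show v'.1.val + 1 = cm + 1
        simp only at h1; omega
      · apply Fin.ext
        show v'.2.val + o = ci + o
        have : v'.2.val = ci := by rw [h2]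
        omega
    · refine Or.inr (Or.inl ⟨?_, ?_⟩)
      · show v'.1.val + 1 = (cm + 1) + 1
        simp only at h1; omega
      · apply Fin.ext
        show v'.2.val + o = ci + o
        have : v'.2.val = ci := by rw [h2]
        omega
    · refine Or.inr (Or.inr ⟨?_, ?_, ?_⟩)
      · show v'.1.val + 1 = (cm + 1) + 1
        simp only at h1; omega
      · show (ci + o) % (2 * 2 ^ (n + 1 - 1 - (cm + 1))) < 2 ^ (n + 1 - 1 - (cm + 1))
        rw [hexp, hmod]
        exact h2
      · show v'.2.val + o = (ci + o) + 2 ^ (n + 1 - 1 - (cm + 1))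
        rw [hexp]
        simp only at h3
        omega
  obtain ⟨w, hwψ, hwne, hwadj⟩ := hψ c (embedV n o ho2 v') hv' hadjBig
  rcases hwadj with ⟨h1, h2⟩ | ⟨h1, h2⟩ | ⟨h1, h2, h3⟩
  · -- w is the left VN of c; pullback is (cm, ci)
    have hkey : embedV n o ho2 (⟨cm, by omega⟩, ⟨ci, by omega⟩) = w := by
      have hw2 : w.2.val = ci + o := by rw [h2]
      have hw1 : w.1.val = cm + 1 := h1
      refine Prod.ext (Fin.ext ?_) (Fin.ext ?_)
      · show cm + 1 = w.1.val; omega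
      · show ci + o = w.2.val; omega
    refine ⟨(⟨cm, by omega⟩, ⟨ci, by omega⟩), ?_, ?_, Or.inl ⟨rfl, rfl⟩⟩
    · show embedV n o ho2 _ ∈ ψ
      rwa [hkey]
    · intro hcontra
      exact hwne (by rw [← hkey, hcontra])
  · have hkey : embedV n o ho2 (⟨cm + 1, by omega⟩, ⟨ci, by omega⟩) = w := by
      have hw2 : w.2.val = ci + o := by rw [h2]
      have hw1 : w.1.val = cm + 1 + 1 := h1
      refine Prod.ext (Fin.ext ?_) (Fin.ext ?_)
      · show cm + 1 + 1 = w.1.val; omega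
      · show ci + o = w.2.val; omega
    refine ⟨(⟨cm + 1, by omega⟩, ⟨ci, by omega⟩), ?_, ?_, Or.inr (Or.inl ⟨rfl, rfl⟩)⟩
    · show embedV n o ho2 _ ∈ ψ
      rwa [hkey]
    · intro hcontra
      exact hwne (by rw [← hkey, hcontra])
  · -- slanted edge
    have hc1 : c.1.val = cm + 1 := rfl
    rw [hc1, hexp] at h2 h3
    have hc2 : c.2.val = ci + o := rfl
    rw [hc2] at h2 h3
    rw [hmod] at h2
    have hlt : ci + 2 ^ (n - 1 - cm) < 2 ^ n := auxLt ci _ (2 ^ n) hdvN ici h2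
    have hkey : embedV n o ho2 (⟨cm + 1, by omega⟩, ⟨ci + 2 ^ (n - 1 - cm), hlt⟩) = w := by
      have hw1 : w.1.val = cm + 1 + 1 := h1
      refine Prod.ext (Fin.ext ?_) (Fin.ext ?_)
      · show cm + 1 + 1 = w.1.val; omega
      · show ci + 2 ^ (n - 1 - cm) + o = w.2.val; omega
    refine ⟨(⟨cm + 1, by omega⟩, ⟨ci + 2 ^ (n - 1 - cm), hlt⟩), ?_, ?_,
      Or.inr (Or.inr ⟨rfl, h2, rfl⟩)⟩
    · show embedV n o ho2 _ ∈ ψ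
      rwa [hkey]
    · intro hcontra
      exact hwne (by rw [← hkey, hcontra])

lemma fullRow : ∀ (n : ℕ) (ψ : Set (Fin (n + 1) × Fin (2 ^ n))), IsStoppingSet n ψ →
    ψ.Nonempty → ∃ i : Fin (2 ^ n), ∀ m : Fin (n + 1), (m, i) ∈ ψ := by
  intro n
  induction n with
  | zero =>
    rintro ψ _ ⟨v, hv⟩
    refine ⟨v.2, fun m => ?_⟩
    have : (m, v.2) = v := by
      obtain ⟨a, b⟩ := v
      have hm : m = a := Fin.ext (by have := m.isLt; have := a.isLt; omega)
      rw [hm]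
    rwa [this]
  | succ n ih =>
    rintro ψ hψ ⟨v, hv⟩
    have rowmem : ∀ (i : Fin (2 ^ (n + 1))), ((⟨0, by omega⟩ : Fin (n + 2)), i) ∈ ψ →
        (∀ m' : Fin (n + 1), ((⟨m'.val + 1, by have := m'.isLt; omega⟩ : Fin (n + 2)), i) ∈ ψ) →
        ∀ m : Fin (n + 2), (m, i) ∈ ψ := by
      intro i h0 hs m
      rcases Nat.eq_zero_or_pos m.val with hm | hm
      · have : m = ⟨0, by omega⟩ := Fin.ext hm
        rw [this]; exact h0
      · have h2 := hs ⟨m.val - 1, by have := m.isLt; omega⟩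
        have he : (⟨m.val - 1 + 1, by have := m.isLt; omega⟩ : Fin (n + 2)) = m :=
          Fin.ext (by show m.val - 1 + 1 = m.val; omega)
        rwa [he] at h2
    have hodB : ∀ k, k ≤ n → 2 ^ k ∣ 2 ^ n := fun k hk => pow_dvd_pow 2 hk
    have hodT : ∀ k, k ≤ n → 2 ^ k ∣ 0 := fun k _ => dvd_zero _
    -- bottom half nonempty implies full row
    have hbot : (embedV n (2 ^ n) le_rfl ⁻¹' ψ).Nonempty →
        ∃ i : Fin (2 ^ (n + 1)), ∀ m : Fin (n + 2), (m, i) ∈ ψ := by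
      intro hne'
      obtain ⟨j, hj⟩ := ih _ (half_stopping n ψ hψ (2 ^ n) le_rfl hodB) hne'
      set i : Fin (2 ^ (n + 1)) := ⟨j.val + 2 ^ n, by have := j.isLt; omega⟩ with hidef
      have hcol : ∀ m' : Fin (n + 1),
          ((⟨m'.val + 1, by have := m'.isLt; omega⟩ : Fin (n + 2)), i) ∈ ψ :=
        fun m' => hj m'
      have hv0 : ((⟨1, by omega⟩ : Fin (n + 2)), i) ∈ ψ := hcol ⟨0, by omega⟩
      set c0 : Fin (n + 1) × Fin (2 ^ (n + 1)) := (⟨0, by omega⟩, i) with hc0def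
      have hadj0 : polarAdj (n + 1) c0 ((⟨1, by omega⟩ : Fin (n + 2)), i) :=
        Or.inr (Or.inl ⟨rfl, rfl⟩)
      obtain ⟨w, hwψ, hwne, hwadj⟩ := hψ c0 _ hv0 hadj0
      rcases hwadj with ⟨h1, h2⟩ | ⟨h1, h2⟩ | ⟨h1, h2, h3⟩
      · have hw : w = ((⟨0, by omega⟩ : Fin (n + 2)), i) := by
          refine Prod.ext (Fin.ext ?_) h2
          exact h1
        rw [hw] at hwψ
        exact ⟨i, rowmem i hwψ hcol⟩
      · exfalso
        apply hwne
        refine Prod.ext (Fin.ext ?_) h2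
        exact h1
      · exfalso
        have hc1 : c0.1.val = 0 := rfl
        have hc2 : c0.2.val = j.val + 2 ^ n := rfl
        rw [hc1, hc2] at h2
        have he : n + 1 - 1 - 0 = n := by omega
        rw [he] at h2
        have hlt : j.val + 2 ^ n < 2 * 2 ^ n := by have := j.isLt; omega
        rw [Nat.mod_eq_of_lt hlt] at h2
        omega
    -- top half nonempty implies full row
    have htop : (embedV n 0 (Nat.zero_le _) ⁻¹' ψ).Nonempty →
        ∃ i : Fin (2 ^ (n + 1)), ∀ m : Fin (n + 2), (m, i) ∈ ψ := by
      intro hne'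
      obtain ⟨j, hj⟩ := ih _ (half_stopping n ψ hψ 0 (Nat.zero_le _) hodT) hne'
      set i : Fin (2 ^ (n + 1)) := ⟨j.val + 0, by have := j.isLt; omega⟩ with hidef
      have hcol : ∀ m' : Fin (n + 1),
          ((⟨m'.val + 1, by have := m'.isLt; omega⟩ : Fin (n + 2)), i) ∈ ψ :=
        fun m' => hj m'
      have hv0 : ((⟨1, by omega⟩ : Fin (n + 2)), i) ∈ ψ := hcol ⟨0, by omega⟩
      set c0 : Fin (n + 1) × Fin (2 ^ (n + 1)) := (⟨0, by omega⟩, i) with hc0def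
      have hadj0 : polarAdj (n + 1) c0 ((⟨1, by omega⟩ : Fin (n + 2)), i) :=
        Or.inr (Or.inl ⟨rfl, rfl⟩)
      obtain ⟨w, hwψ, hwne, hwadj⟩ := hψ c0 _ hv0 hadj0
      rcases hwadj with ⟨h1, h2⟩ | ⟨h1, h2⟩ | ⟨h1, h2, h3⟩
      · have hw : w = ((⟨0, by omega⟩ : Fin (n + 2)), i) := by
          refine Prod.ext (Fin.ext ?_) h2
          exact h1
        rw [hw] at hwψ
        exact ⟨i, rowmem i hwψ hcol⟩
      · exfalso
        apply hwne
        refine Prod.ext (Fin.ext ?_) h2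
        exact h1
      · -- slanted: the bottom half is nonempty at (column 1, row j + 2^n)
        have hc1 : c0.1.val = 0 := rfl
        have hc2 : c0.2.val = j.val + 0 := rfl
        rw [hc1, hc2] at h3
        have he : n + 1 - 1 - 0 = n := by omega
        rw [he] at h3
        apply hbot
        refine ⟨(⟨0, by omega⟩, j), ?_⟩
        show embedV n (2 ^ n) le_rfl (⟨0, by omega⟩, j) ∈ ψ
        have hw : embedV n (2 ^ n) le_rfl (⟨0, by omega⟩, j) = w := by
          have hw1 : w.1.val = 0 + 1 := h1
          refine Prod.ext (Fin.ext ?_) (Fin.ext ?_)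
          · show 0 + 1 = w.1.val; omega
          · show j.val + 2 ^ n = w.2.val; omega
        rwa [hw]
    -- find an element of ψ with column ≥ 1
    have hstep : ∃ p ∈ ψ, 1 ≤ p.1.val := by
      by_cases h1 : 1 ≤ v.1.val
      · exact ⟨v, hv, h1⟩
      · have hv1 : v.1.val = 0 := by omega
        set c : Fin (n + 1) × Fin (2 ^ (n + 1)) := (⟨0, by omega⟩, v.2) with hcdef
        have hadj : polarAdj (n + 1) c v := Or.inl ⟨hv1, rfl⟩
        obtain ⟨w, hwψ, hwne, hwadj⟩ := hψ c v hv hadj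
        rcases hwadj with ⟨h1', h2'⟩ | ⟨h1', h2'⟩ | ⟨h1', h2', h3'⟩
        · exfalso
          apply hwne
          refine Prod.ext (Fin.ext ?_) h2'
          have : w.1.val = 0 := h1'
          omega
        · have : w.1.val = 0 + 1 := h1'
          exact ⟨w, hwψ, by omega⟩
        · have : w.1.val = 0 + 1 := h1'
          exact ⟨w, hwψ, by omega⟩
    obtain ⟨p, hp, hp1⟩ := hstep
    by_cases hhalf : p.2.val < 2 ^ n
    · apply htop
      refine ⟨(⟨p.1.val - 1, by have := p.1.isLt; omega⟩, ⟨p.2.val, hhalf⟩), ?_⟩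
      show embedV n 0 (Nat.zero_le _) _ ∈ ψ
      have hk : embedV n 0 (Nat.zero_le _)
          (⟨p.1.val - 1, by have := p.1.isLt; omega⟩, ⟨p.2.val, hhalf⟩) = p := by
        refine Prod.ext (Fin.ext ?_) (Fin.ext ?_)
        · show p.1.val - 1 + 1 = p.1.val; omega
        · show p.2.val + 0 = p.2.val; omega
      rwa [hk]
    · apply hbot
      refine ⟨(⟨p.1.val - 1, by have := p.1.isLt; omega⟩,
        ⟨p.2.val - 2 ^ n, by have := p.2.isLt; omega⟩), ?_⟩
      show embedV n (2 ^ n) le_rfl _ ∈ ψ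
      have hk : embedV n (2 ^ n) le_rfl
          (⟨p.1.val - 1, by have := p.1.isLt; omega⟩,
           ⟨p.2.val - 2 ^ n, by have := p.2.isLt; omega⟩) = p := by
        refine Prod.ext (Fin.ext ?_) (Fin.ext ?_)
        · show p.1.val - 1 + 1 = p.1.val; omega
        · show p.2.val - 2 ^ n + 2 ^ n = p.2.val; omega
      rwa [hk]

/-- Success of the peeling encoder for polar codes, in its equivalent stopping-set
formulation: if `F` and `A` partition the row indices `[N]` (frozen indices on the
leftmost VN column, information indices on the rightmost VN column), then no nonempty
stopping set avoids both the leftmost-column frozen VNs and the rightmost-column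
information VNs — every nonempty stopping set contains a leftmost-column VN with index
in `F` or a rightmost-column VN with index in `A`; hence the peeling process, started
from the known leftmost-column VNs indexed by `F` and rightmost-column VNs indexed by
`A`, determines all variable nodes. -/
theorem peeling_encoder_succeeds (n : ℕ) (F A : Set (Fin (2 ^ n)))
    (hpart : F ∪ A = Set.univ) (hdisj : F ∩ A = ∅)
    (ψ : Set (Fin (n + 1) × Fin (2 ^ n))) (hψ : IsStoppingSet n ψ) (hne : ψ.Nonempty) :
    (∃ i ∈ F, ((0 : Fin (n + 1)), i) ∈ ψ) ∨ (∃ i ∈ A, (Fin.last n, i) ∈ ψ) := by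
  obtain ⟨i, hrow⟩ := fullRow n ψ hψ hne
  have hmem : i ∈ F ∪ A := by rw [hpart]; exact Set.mem_univ i
  rcases hmem with hF | hA
  · exact Or.inl ⟨i, hF, hrow 0⟩
  · exact Or.inr ⟨i, hA, hrow (Fin.last n)⟩
end
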